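/- No definition of proxy use satisfying the four semantic properties (Explicit Use, Preprocessing, Dummy, Independence) can exist: there is a population distribution and a pair of models witnessing a contradiction among these axioms. -/
import Mathlib


open scoped Classical

noncomputable def prob {Ω : Type*} [Fintype Ω] (μ : Ω → ℝ) (p : Ω → Prop) : ℝ :=
  ∑ ω, if p ω then μ ω else 0

/-- Pointwise statistical independence of two random variables. -/
def Indep {Ω 𝒳 𝒵 : Type*} [Fintype Ω] (μ : Ω → ℝ) (X : Ω → 𝒳) (Z : Ω → 𝒵) : Prop :=
  ∀ (x : 𝒳) (z : 𝒵),
    prob μ (fun ω => X ω = x ∧ Z ω = z) =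
      prob μ (fun ω => X ω = x) * prob μ (fun ω => Z ω = z)

/-- The uniform distribution on two independent bits. -/
noncomputable def unif : Bool × Bool → ℝ := fun _ => (1 : ℝ) / 4

lemma indep_fst_snd : Indep unif (Prod.fst : Bool × Bool → Bool) Prod.snd := by
  intro x z
  cases x <;> cases z <;>
    simp [Indep, prob, unif, Fintype.sum_prod_type] <;> norm_num

/-- Impossibility of a semantic proxy-use notion: no predicate
`U A X Z` ("the model `A` with input variable `X` has proxy use of `Z`")
can satisfy Explicit Use, Preprocessing, Dummy and Independence
simultaneously, even over the uniform distribution on two independent bits. -/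
theorem semantic_proxy_use_impossible :
    ¬ ∃ U : ∀ {𝒳 𝒵 𝒲 : Type}, (𝒳 → 𝒲) → ((Bool × Bool) → 𝒳) → ((Bool × Bool) → 𝒵) → Prop,
      -- (1) Explicit Use
      (∀ (𝒳 𝒵 𝒲 : Type) (A : 𝒳 × 𝒵 → 𝒲) (X : (Bool × Bool) → 𝒳) (Z : (Bool × Bool) → 𝒵),
        (∃ x z₁ z₂, A (x, z₁) ≠ A (x, z₂)) →
        U A (fun ω => (X ω, Z ω)) Z) ∧
      -- (2) Preprocessing
      (∀ (𝒳 𝒯 𝒵 𝒲 : Type) (A : 𝒳 × 𝒯 → 𝒲) (X : (Bool × Bool) → 𝒳)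
          (T : (Bool × Bool) → 𝒯) (Z : (Bool × Bool) → 𝒵) (f : 𝒳 → 𝒯),
        U A (fun ω => (X ω, T ω)) Z →
        prob unif (fun ω => f (X ω) = T ω) = 1 →
        U (fun x => A (x, f x)) X Z) ∧
      -- (3) Dummy
      (∀ (𝒳 𝒯 𝒵 𝒲 : Type) (A : 𝒳 → 𝒲) (X : (Bool × Bool) → 𝒳)
          (T : (Bool × Bool) → 𝒯) (Z : (Bool × Bool) → 𝒵),
        (U A X Z ↔ U (fun p : 𝒳 × 𝒯 => A p.1) (fun ω => (X ω, T ω)) Z)) ∧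
      -- (4) Independence
      (∀ (𝒳 𝒵 𝒲 : Type) (A : 𝒳 → 𝒲) (X : (Bool × Bool) → 𝒳) (Z : (Bool × Bool) → 𝒵),
        Indep unif X Z → ¬ U A X Z) := by
  rintro ⟨U, hEU, hPre, hDum, hInd⟩
  set A₀ : (Bool × Bool) × Bool → Bool := fun p => xor (xor p.1.1 p.1.2) p.2 with hA₀
  have h1 : U A₀ (fun ω => (id ω, Prod.snd ω)) Prod.snd := by
    exact hEU _ _ _ A₀ id Prod.snd ⟨(false, false), false, true, by decide⟩
  have hprob : prob unif (fun ω : Bool × Bool => Prod.snd (id ω) = Prod.snd ω) = 1 := by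
    simp [prob, unif, Fintype.sum_prod_type]
  have h2 : U (fun x => A₀ (x, Prod.snd x)) (id : Bool × Bool → Bool × Bool) Prod.snd :=
    hPre _ _ _ _ A₀ id Prod.snd Prod.snd Prod.snd h1 hprob
  have heq : (fun x : Bool × Bool => A₀ (x, Prod.snd x)) =
      (fun p : Bool × Bool => (id p.1 : Bool)) := by
    funext p; simp [hA₀, Bool.xor_assoc]
  have hid : (id : Bool × Bool → Bool × Bool) = fun ω : Bool × Bool => (ω.1, ω.2) := by
    funext ω; rfl
  rw [heq, hid] at h2
  have h3 : U (id : Bool → Bool) (Prod.fst : Bool × Bool → Bool) Prod.snd :=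
    (hDum Bool Bool Bool Bool id Prod.fst Prod.snd Prod.snd).mpr h2
  exact hInd _ _ _ _ _ _ indep_fst_snd h3
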